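/- For every integer r ≥ 1, the following identity holds in ℚ(q), with E = q^8−q^6−q^5+q^3, Q = (q−1)^(2r) − 3(q−1)^r + 2·3^r, A = (1/2)(q^2−1)^r + (1/2)(q−1)^(2r) − 2(q−1)^r + 3^r, B = −(1/2)(q^2−1)^r + (1/2)(q−1)^(2r) − (q−1)^r + 3^r: [((1/2)(q^2−1)^r + (1/6)(q−1)^(2r) + (1/3)(q^2+q+1)^r − (q−1)^r)·q^6 + (−(1/2)(q^2−1)^r + (1/6)(q−1)^(2r) + (1/3)(q^2+q+1)^r)·q^3 + ((1/3)(q−1)^(2r) − (1/3)(q^2+q+1)^r − (q−1)^r + 3^r)·(q^5+q^4)] + Q(q^r−q)·E/((q−1)^2 q) + 2·[A·((q^(2r)−q^(r+1))(q^4+q^3+q^2) + (q^2−q^(r+1))(q^3+q^2+q)) + B·((q^(2r)−q^(r+1))(q^3+q^2+q) + (q^2−q^(r+1))(q^4+q^3+q^2))] + Q(q^r−q)^2 q^r·E/((q−1)^2 q^3) = (2·3^r − 3(q−1)^r + (q−1)^(2r))(q+1)(q^2+q+1)(q^r−q)(q^2 + q^(2r) − q^(r+1)) + (2·3^r − 2(q−1)^r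 + (q−1)^(2r) − (q^2−1)^r)·q·(q^2+q+1)(q^r−q)(q^r−q^2) + (2·3^r − 4(q−1)^r + (q−1)^(2r) + (q^2−1)^r)·q^2·(q^2+q+1)(q^r−1)(q^r−q) + (1/6)q^3((q−1)^(2r) − 3(q^2−1)^r + 2(q^2+q+1)^r + 2q(q+1)(3^(r+1) − 3(q−1)^r + (q−1)^(2r) − (q^2+q+1)^r)) + (1/6)q^6(−6(q−1)^r + (q−1)^(2r) + 3(q^2−1)^r + 2(q^2+q+1)^r). (This is the computation of the E-polynomial e(R_3) of the stratum of reducible representations of F_r in SL(3,ℂ) with three distinct eigenvalue sequences, summing the substrata R_{31}, R_{32}, R_{33}, R_{34}, R_{35}.) -/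

import Mathlib

/-- The variable `q`, viewed as a rational function in `ℚ(q)`. -/
noncomputable def q : RatFunc ℚ := RatFunc.X

/-- `E = e(PGL(3,ℂ))`. -/
noncomputable def E : RatFunc ℚ := q^8 - q^6 - q^5 + q^3

/-- `Q`, the E-polynomial of the base space of eigenvalues for the stratum
`R_3`. -/
noncomputable def Q (r : ℕ) : RatFunc ℚ := (q - 1)^(2*r) - 3 * (q - 1)^r + 2 * 3^r

/-- `A`, the coefficient of `T` in the `⟨(1,2)⟩`-equivariant E-polynomial of
the base `B_r`. -/
noncomputable def A (r : ℕ) : RatFunc ℚ :=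
  (1/2) * (q^2 - 1)^r + (1/2) * (q - 1)^(2*r) - 2 * (q - 1)^r + 3^r

/-- `B`, the coefficient of `N` in the `⟨(1,2)⟩`-equivariant E-polynomial of
the base `B_r`. -/
noncomputable def B (r : ℕ) : RatFunc ℚ :=
  -(1/2) * (q^2 - 1)^r + (1/2) * (q - 1)^(2*r) - (q - 1)^r + 3^r

lemma RatFunc.X_sub_one_ne_zero {K : Type*} [Field K] : (RatFunc.X : RatFunc K) - 1 ≠ 0 := by
  have h : (RatFunc.X : RatFunc K) - 1 = algebraMap (Polynomial K) (RatFunc K) (Polynomial.X - 1) :=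
    by simp [RatFunc.algebraMap_X]
  rw [h]
  exact RatFunc.algebraMap_ne_zero (Polynomial.X_sub_C_ne_zero 1)

-- Both quotients are polynomials because `E = q^3 (q^2 - 1) (q^3 - 1)`.
lemma E_div_sq_sub_one_mul_q : E / ((q - 1)^2 * q) = q^2 * (q + 1) * (q^2 + q + 1) := by
  rw [div_eq_iff (mul_ne_zero (pow_ne_zero _ RatFunc.X_sub_one_ne_zero) RatFunc.X_ne_zero), E]
  ring

lemma E_div_sq_sub_one_mul_q_cube : E / ((q - 1)^2 * q^3) = (q + 1) * (q^2 + q + 1) := by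
  rw [div_eq_iff (mul_ne_zero (pow_ne_zero _ RatFunc.X_sub_one_ne_zero)
    (pow_ne_zero _ RatFunc.X_ne_zero)), E]
  ring

lemma q_sq_sub_one_pow (r : ℕ) : (q^2 - 1)^r = (q - 1)^r * (q + 1)^r := by
  rw [← mul_pow]
  ring

theorem e_R3_stratum_general (r : ℕ) :
    (((1/2) * (q^2 - 1)^r + (1/6) * (q - 1)^(2*r) + (1/3) * (q^2 + q + 1)^r
          - (q - 1)^r) * q^6
        + (-(1/2) * (q^2 - 1)^r + (1/6) * (q - 1)^(2*r)
          + (1/3) * (q^2 + q + 1)^r) * q^3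
        + ((1/3) * (q - 1)^(2*r) - (1/3) * (q^2 + q + 1)^r - (q - 1)^r + 3^r)
          * (q^5 + q^4))
      + Q r * (q^r - q) * E / ((q - 1)^2 * q)
      + 2 * (A r * ((q^(2*r) - q^(r+1)) * (q^4 + q^3 + q^2)
              + (q^2 - q^(r+1)) * (q^3 + q^2 + q))
          + B r * ((q^(2*r) - q^(r+1)) * (q^3 + q^2 + q)
              + (q^2 - q^(r+1)) * (q^4 + q^3 + q^2)))
      + Q r * (q^r - q)^2 * q^r * E / ((q - 1)^2 * q^3)
    = (2 * 3^r - 3 * (q - 1)^r + (q - 1)^(2*r)) * (q + 1) * (q^2 + q + 1)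
        * (q^r - q) * (q^2 + q^(2*r) - q^(r+1))
      + (2 * 3^r - 2 * (q - 1)^r + (q - 1)^(2*r) - (q^2 - 1)^r) * q
        * (q^2 + q + 1) * (q^r - q) * (q^r - q^2)
      + (2 * 3^r - 4 * (q - 1)^r + (q - 1)^(2*r) + (q^2 - 1)^r) * q^2
        * (q^2 + q + 1) * (q^r - 1) * (q^r - q)
      + (1/6) * q^3 * ((q - 1)^(2*r) - 3 * (q^2 - 1)^r + 2 * (q^2 + q + 1)^r
          + 2 * q * (q + 1)
            * (3^(r+1) - 3 * (q - 1)^r + (q - 1)^(2*r) - (q^2 + q + 1)^r))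
      + (1/6) * q^6 * (-6 * (q - 1)^r + (q - 1)^(2*r) + 3 * (q^2 - 1)^r
          + 2 * (q^2 + q + 1)^r) := by
  rw [mul_div_assoc, E_div_sq_sub_one_mul_q, mul_div_assoc, E_div_sq_sub_one_mul_q_cube]
  -- What remains is a polynomial identity in `q`, `q^r`, `(q - 1)^r`, `(q + 1)^r`,
  -- `(q^2 + q + 1)^r` and `3^r`.
  simp only [Q, A, B, q_sq_sub_one_pow]
  ring

/-- Computation of `e(R_3)`, the E-polynomial of the stratum of reducible
representations of `F_r` in `SL(3,ℂ)` with three distinct eigenvalue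
sequences, as the sum of the substrata `R_{31}, ..., R_{35}`. -/
theorem e_R3_stratum (r : ℕ) (hr : 1 ≤ r) :
    (((1/2) * (q^2 - 1)^r + (1/6) * (q - 1)^(2*r) + (1/3) * (q^2 + q + 1)^r
          - (q - 1)^r) * q^6
        + (-(1/2) * (q^2 - 1)^r + (1/6) * (q - 1)^(2*r)
          + (1/3) * (q^2 + q + 1)^r) * q^3
        + ((1/3) * (q - 1)^(2*r) - (1/3) * (q^2 + q + 1)^r - (q - 1)^r + 3^r)
          * (q^5 + q^4))
      + Q r * (q^r - q) * E / ((q - 1)^2 * q)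
      + 2 * (A r * ((q^(2*r) - q^(r+1)) * (q^4 + q^3 + q^2)
              + (q^2 - q^(r+1)) * (q^3 + q^2 + q))
          + B r * ((q^(2*r) - q^(r+1)) * (q^3 + q^2 + q)
              + (q^2 - q^(r+1)) * (q^4 + q^3 + q^2)))
      + Q r * (q^r - q)^2 * q^r * E / ((q - 1)^2 * q^3)
    = (2 * 3^r - 3 * (q - 1)^r + (q - 1)^(2*r)) * (q + 1) * (q^2 + q + 1)
        * (q^r - q) * (q^2 + q^(2*r) - q^(r+1))
      + (2 * 3^r - 2 * (q - 1)^r + (q - 1)^(2*r) - (q^2 - 1)^r) * q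
        * (q^2 + q + 1) * (q^r - q) * (q^r - q^2)
      + (2 * 3^r - 4 * (q - 1)^r + (q - 1)^(2*r) + (q^2 - 1)^r) * q^2
        * (q^2 + q + 1) * (q^r - 1) * (q^r - q)
      + (1/6) * q^3 * ((q - 1)^(2*r) - 3 * (q^2 - 1)^r + 2 * (q^2 + q + 1)^r
          + 2 * q * (q + 1)
            * (3^(r+1) - 3 * (q - 1)^r + (q - 1)^(2*r) - (q^2 + q + 1)^r))
      + (1/6) * q^6 * (-6 * (q - 1)^r + (q - 1)^(2*r) + 3 * (q^2 - 1)^r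
          + 2 * (q^2 + q + 1)^r) :=
  e_R3_stratum_general r
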